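/- Let F be C¹ on ℝ^{n} and C² in a neighborhood of the origin, with F(0) = 0. Assume the origin of ė = F(e) is locally exponentially stable and globally attractive. Then there exist a positive real number λ̃ and a strictly increasing function k̃ : ℝ₊ → ℝ₊ such that the solutions of the linearized system along trajectories satisfy |Φ(e,t) δ| ≤ k̃(|e|) exp(−λ̃ t)|δ| for all e, δ in ℝ^{n} and all t ≥ 0. -/

import Mathlib

open Real Set Filter
open scoped RealInnerProductSpace Topology

/-- Euclidean state space ℝⁿ. -/
abbrev Euc (n : ℕ) := EuclideanSpace ℝ (Fin n)

open Metric

/-!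
Near the origin, the transition matrix `Φ(0, t)` inherits the exponential decay of the flow,
since `Φ(0, t) δ` is the limit of the difference quotients `E(h δ, t) / h`. For small `|e|`, the
variation-of-constants formula around `Φ(0, ·)` and Grönwall's inequality show that `Φ(e, t)`
still decays at rate `λ / 2`, because `DF` is Lipschitz near `0`. For an arbitrary `e₀`, global
attractivity brings `E(e₀, T)` into that small ball at some time `T`; by continuous dependence
the same holds for `e` near `e₀`, and the cocycle identity `Φ(e, T + u) = Φ(E(e, T), u) Φ(e, T)`
gives an exponential bound that is uniform near `e₀`. Compactness of balls turns these local
constants into a bound depending only on `|e|`, made strictly increasing by taking the infimum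
of admissible constants and adding `|e|`.
-/

variable {E : Type*} [NormedAddCommGroup E] [NormedSpace ℝ E]

theorem HasDerivWithinAt.comp_const_add_Ici {f : ℝ → E} {f' : E} {T u : ℝ} (hT : 0 ≤ T)
    (hf : HasDerivWithinAt f f' (Ici 0) (T + u)) :
    HasDerivWithinAt (fun v => f (T + v)) f' (Ici 0) u := by
  have hmaps : MapsTo (T + ·) (Ici (0 : ℝ)) (Ici 0) := fun v (hv : 0 ≤ v) => by
    simp only [mem_Ici]; linarith
  simpa [Function.comp_def] using hf.scomp u ((hasDerivAt_id u).const_add T).hasDerivWithinAt hmaps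

theorem ContinuousOn.of_hasDerivWithinAt_Ici {f f' : ℝ → E}
    (hf : ∀ t, 0 ≤ t → HasDerivWithinAt f (f' t) (Ici 0) t) : ContinuousOn f (Ici 0) :=
  fun t ht => (hf t ht).continuousWithinAt

theorem eqOn_Ici_of_hasDerivWithinAt_of_locallyLipschitz [ProperSpace E] {F : E → E}
    (hF : LocallyLipschitz F) {f g : ℝ → E}
    (hf : ∀ t, 0 ≤ t → HasDerivWithinAt f (F (f t)) (Ici 0) t)
    (hg : ∀ t, 0 ≤ t → HasDerivWithinAt g (F (g t)) (Ici 0) t) (h0 : f 0 = g 0) :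
    EqOn f g (Ici 0) := by
  intro b (hb : 0 ≤ b)
  have hfc := (ContinuousOn.of_hasDerivWithinAt_Ici hf).mono
    (Icc_subset_Ici_self : Icc 0 b ⊆ Ici 0)
  have hgc := (ContinuousOn.of_hasDerivWithinAt_Ici hg).mono
    (Icc_subset_Ici_self : Icc 0 b ⊆ Ici 0)
  obtain ⟨R, hR⟩ := ((isCompact_Icc.image_of_continuousOn hfc).union
    (isCompact_Icc.image_of_continuousOn hgc)).isBounded.subset_closedBall 0
  obtain ⟨K, hK⟩ := (hF.locallyLipschitzOn (s := closedBall 0 R)).exists_lipschitzOnWith_of_compact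
    (isCompact_closedBall 0 R)
  refine ODE_solution_unique_of_mem_Icc_right (v := fun _ => F) (s := fun _ => closedBall 0 R)
    (fun _ _ => hK) hfc (fun t ht => (hf t ht.1).mono (Ici_subset_Ici.2 ht.1))
    (fun t ht => hR (Or.inl (mem_image_of_mem f (Ico_subset_Icc_self ht)))) hgc
    (fun t ht => (hg t ht.1).mono (Ici_subset_Ici.2 ht.1))
    (fun t ht => hR (Or.inr (mem_image_of_mem g (Ico_subset_Icc_self ht)))) h0
    (right_mem_Icc.2 hb)

theorem eqOn_Ici_of_hasDerivWithinAt_clm_comp {B : ℝ → E →L[ℝ] E} (hB : ContinuousOn B (Ici 0))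
    {f g : ℝ → E →L[ℝ] E}
    (hf : ∀ t, 0 ≤ t → HasDerivWithinAt f (B t ∘L f t) (Ici 0) t)
    (hg : ∀ t, 0 ≤ t → HasDerivWithinAt g (B t ∘L g t) (Ici 0) t) (h0 : f 0 = g 0) :
    EqOn f g (Ici 0) := by
  intro b (hb : 0 ≤ b)
  obtain ⟨M, hM⟩ := isCompact_Icc.exists_bound_of_continuousOn
    (hB.mono (Icc_subset_Ici_self : Icc 0 b ⊆ Ici 0))
  have hLip : ∀ t ∈ Ico 0 b,
      LipschitzOnWith (Real.toNNReal M) (fun W : E →L[ℝ] E => B t ∘L W) univ := by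
    refine fun t ht => (LipschitzWith.of_dist_le_mul fun W W' => ?_).lipschitzOnWith
    rw [dist_eq_norm, dist_eq_norm, ← ContinuousLinearMap.comp_sub]
    exact (ContinuousLinearMap.opNorm_comp_le _ _).trans
      (mul_le_mul_of_nonneg_right ((hM t (Ico_subset_Icc_self ht)).trans (le_coe_toNNReal M))
        (norm_nonneg _))
  exact ODE_solution_unique_of_mem_Icc_right hLip
    ((ContinuousOn.of_hasDerivWithinAt_Ici hf).mono Icc_subset_Ici_self)
    (fun t ht => (hf t ht.1).mono (Ici_subset_Ici.2 ht.1)) (fun _ _ => trivial)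
    ((ContinuousOn.of_hasDerivWithinAt_Ici hg).mono Icc_subset_Ici_self)
    (fun t ht => (hg t ht.1).mono (Ici_subset_Ici.2 ht.1)) (fun _ _ => trivial) h0
    (right_mem_Icc.2 hb)

theorem le_mul_exp_of_le_add_mul_integral {χ : ℝ → ℝ} {a K : ℝ} (hχ : Continuous χ) (hK : 0 ≤ K)
    (h : ∀ t, 0 ≤ t → χ t ≤ a + K * ∫ s in 0..t, χ s) {t : ℝ} (ht : 0 ≤ t) :
    χ t ≤ a * exp (K * t) := by
  set w : ℝ → ℝ := fun τ => a + K * ∫ s in 0..τ, χ s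
  have hw : ∀ τ, HasDerivAt w (K * χ τ) τ := fun τ =>
    ((hχ.integral_hasStrictDerivAt 0 τ).hasDerivAt.const_mul K).const_add a
  have hgr := le_gronwallBound_of_liminf_deriv_right_le (f := w) (δ := a) (ε := 0) (a := 0) (b := t)
    (fun τ _ => (hw τ).continuousAt.continuousWithinAt)
    (fun τ _ r hr => (hw τ).hasDerivWithinAt.liminf_right_slope_le hr)
    (by simp [w]) (fun τ hτ => by simpa using mul_le_mul_of_nonneg_left (h τ hτ.1) hK)
    t (right_mem_Icc.2 ht)
  calc χ t ≤ w t := h t ht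
    _ ≤ a * exp (K * t) := by simpa [gronwallBound_ε0] using hgr

theorem forall_lt_of_forall_Ico_lt {d : ℝ → ℝ} {a b c : ℝ} (hd : ContinuousOn d (Icc a b))
    (h : ∀ τ ∈ Icc a b, (∀ v ∈ Ico a τ, d v < c) → d τ < c) : ∀ v ∈ Icc a b, d v < c := by
  by_contra! hbad
  set S := {v | v ∈ Icc a b ∧ c ≤ d v}
  have hS : IsCompact S := isCompact_Icc.of_isClosed_subset
    (hd.preimage_isClosed_of_isClosed isClosed_Icc isClosed_Ici) fun v hv => hv.1
  have hτ : sInf S ∈ S := hS.sInf_mem hbad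
  refine (h _ hτ.1 fun v hv => ?_).not_ge hτ.2
  by_contra! hv'
  exact hv.2.not_ge (csInf_le hS.bddBelow ⟨⟨hv.1, hv.2.le.trans hτ.1.2⟩, hv'⟩)

theorem norm_le_mul_exp_of_comp {Ψ Q : ℝ → E →L[ℝ] E} {T N k μ : ℝ} (hT : 0 ≤ T) (hμ : 0 ≤ μ)
    (hΨ : ∀ u ∈ Icc 0 T, ‖Ψ u‖ ≤ N) (hQ : ∀ u, 0 ≤ u → ‖Q u‖ ≤ k * exp (-μ * u))
    (hΨQ : ∀ u, 0 ≤ u → Ψ (T + u) = Q u ∘L Ψ T) {t : ℝ} (ht : 0 ≤ t) :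
    ‖Ψ t‖ ≤ max 1 k * N * exp (μ * T) * exp (-μ * t) := by
  have hN : 0 ≤ N := (norm_nonneg _).trans (hΨ 0 ⟨le_rfl, hT⟩)
  rw [mul_assoc, ← exp_add, show μ * T + -μ * t = -μ * (t - T) by ring]
  rcases le_total t T with htT | hTt
  · calc ‖Ψ t‖ ≤ 1 * N * 1 := by simpa using hΨ t ⟨ht, htT⟩
      _ ≤ max 1 k * N * exp (-μ * (t - T)) := by
          gcongr
          · exact le_max_left _ _
          · exact one_le_exp (by nlinarith)
  · have hQt := hQ (t - T) (sub_nonneg.2 hTt)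
    calc ‖Ψ t‖ = ‖Q (t - T) ∘L Ψ T‖ := by rw [← hΨQ _ (sub_nonneg.2 hTt), add_sub_cancel]
      _ ≤ ‖Q (t - T)‖ * ‖Ψ T‖ := ContinuousLinearMap.opNorm_comp_le _ _
      _ ≤ k * exp (-μ * (t - T)) * N :=
          mul_le_mul hQt (hΨ T ⟨hT, le_rfl⟩) (norm_nonneg _) ((norm_nonneg _).trans hQt)
      _ ≤ max 1 k * N * exp (-μ * (t - T)) := by
          rw [mul_right_comm]; gcongr; exact le_max_right _ _

structure IsTransitionMatrix (B P : ℝ → E →L[ℝ] E) : Prop where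
  zero : P 0 = ContinuousLinearMap.id ℝ E
  hasDerivWithinAt : ∀ t, 0 ≤ t → HasDerivWithinAt P (B t ∘L P t) (Ici 0) t

namespace IsTransitionMatrix

variable {A : E →L[ℝ] E} {B P Ψ : ℝ → E →L[ℝ] E}

theorem continuousOn (hP : IsTransitionMatrix B P) : ContinuousOn P (Ici 0) :=
  .of_hasDerivWithinAt_Ici hP.hasDerivWithinAt

theorem hasDerivAt (hP : IsTransitionMatrix B P) {t : ℝ} (ht : 0 < t) :
    HasDerivAt P (B t ∘L P t) t :=
  (hP.hasDerivWithinAt t ht.le).hasDerivAt (Ici_mem_nhds ht)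

theorem comp_comm (hP : IsTransitionMatrix (fun _ => A) P) {t : ℝ} (ht : 0 ≤ t) :
    A ∘L P t = P t ∘L A := by
  refine eqOn_Ici_of_hasDerivWithinAt_clm_comp (B := fun _ => A) (f := fun s => A ∘L P s)
    (g := fun s => P s ∘L A) continuousOn_const (fun s hs => ?_) (fun s hs => ?_)
    (by simp [hP.zero]) ht
  · simpa using (hasDerivWithinAt_const s _ A).clm_comp (hP.hasDerivWithinAt s hs)
  · simpa [ContinuousLinearMap.comp_assoc] using
      (hP.hasDerivWithinAt s hs).clm_comp (hasDerivWithinAt_const s _ A)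

theorem comp_of_shift (hP : IsTransitionMatrix B P) (hB : ContinuousOn B (Ici 0)) {T : ℝ}
    (hT : 0 ≤ T) (hQ : IsTransitionMatrix (fun u => B (T + u)) Ψ) {u : ℝ} (hu : 0 ≤ u) :
    P (T + u) = Ψ u ∘L P T := by
  have hmaps : MapsTo (T + ·) (Ici (0 : ℝ)) (Ici 0) := fun v (hv : 0 ≤ v) => by
    simp only [mem_Ici]; linarith
  refine eqOn_Ici_of_hasDerivWithinAt_clm_comp (B := fun u => B (T + u)) (f := fun u => P (T + u))
    (g := fun u => Ψ u ∘L P T)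
    (hB.comp (continuous_const_add T).continuousOn hmaps)
    (fun s hs => (hP.hasDerivWithinAt (T + s) (by linarith)).comp_const_add_Ici hT)
    (fun s hs => ?_) (by simp [hQ.zero]) hu
  simpa [ContinuousLinearMap.comp_assoc] using
    (hQ.hasDerivWithinAt s hs).clm_comp (hasDerivWithinAt_const s _ (P T))

theorem norm_le_exp (hP : IsTransitionMatrix B P) {T M : ℝ} (hB : ∀ s ∈ Ico 0 T, ‖B s‖ ≤ M)
    {t : ℝ} (ht : t ∈ Icc 0 T) : ‖P t‖ ≤ exp (M * t) := by
  have := norm_le_gronwallBound_of_norm_deriv_right_le (δ := 1) (ε := 0)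
    (hP.continuousOn.mono (Icc_subset_Ici_self : Icc 0 T ⊆ Ici 0))
    (fun s hs => (hP.hasDerivWithinAt s hs.1).mono (Ici_subset_Ici.2 hs.1))
    (by rw [hP.zero]; exact ContinuousLinearMap.norm_id_le)
    (fun s hs => by
      simpa using (ContinuousLinearMap.opNorm_comp_le _ _).trans
        (mul_le_mul_of_nonneg_right (hB s hs) (norm_nonneg _))) t ht
  simpa [gronwallBound_ε0] using this

theorem eq_add_integral [CompleteSpace E] (hP : IsTransitionMatrix (fun _ => A) P)
    (hΨ : IsTransitionMatrix B Ψ) (hB : ContinuousOn B (Ici 0)) {t : ℝ} (ht : 0 ≤ t) :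
    Ψ t = P t + ∫ s in 0..t, P (t - s) ∘L ((B s - A) ∘L Ψ s) := by
  have hmaps : MapsTo (t - ·) (Icc 0 t) (Ici 0) := fun s hs => by
    simp only [mem_Ici]; linarith [hs.2]
  have hPc : ContinuousOn (fun s => P (t - s)) (Icc 0 t) :=
    hP.continuousOn.comp (continuous_const.sub continuous_id).continuousOn hmaps
  have hΨc := hΨ.continuousOn.mono (Icc_subset_Ici_self : Icc 0 t ⊆ Ici 0)
  have hderiv : ∀ s ∈ Ioo 0 t, HasDerivAt (fun s => P (t - s) ∘L Ψ s)
      (P (t - s) ∘L ((B s - A) ∘L Ψ s)) s := by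
    intro s hs
    have hPs : HasDerivAt (fun s => P (t - s)) (-(A ∘L P (t - s))) s := by
      simpa [Function.comp_def] using
        (hP.hasDerivAt (sub_pos.2 hs.2)).scomp s ((hasDerivAt_id s).const_sub t)
    convert hPs.clm_comp (hΨ.hasDerivAt hs.1) using 1
    rw [ContinuousLinearMap.neg_comp, hP.comp_comm (sub_pos.2 hs.2).le]
    ext x
    simp [sub_eq_neg_add]
  have hint : IntervalIntegrable (fun s => P (t - s) ∘L ((B s - A) ∘L Ψ s))
      MeasureTheory.volume 0 t :=
    (hPc.clm_comp (((hB.mono Icc_subset_Ici_self).sub continuousOn_const).clm_comp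
      hΨc)).intervalIntegrable_of_Icc ht
  rw [intervalIntegral.integral_eq_sub_of_hasDeriv_right_of_le ht (hPc.clm_comp hΨc)
    (fun s hs => (hderiv s hs).hasDerivWithinAt) hint]
  simp [hP.zero, hΨ.zero]

theorem norm_le_exp_mul_add_integral [CompleteSpace E] (hP : IsTransitionMatrix (fun _ => A) P)
    (hΨ : IsTransitionMatrix B Ψ) (hB : ContinuousOn B (Ici 0)) {k lam β : ℝ}
    (hPk : ∀ t, 0 ≤ t → ‖P t‖ ≤ k * exp (-lam * t)) (hBA : ∀ s, 0 ≤ s → ‖B s - A‖ ≤ β)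
    {t : ℝ} (ht : 0 ≤ t) :
    ‖Ψ t‖ ≤ exp (-lam * t) * (k + k * β * ∫ s in 0..t, exp (lam * s) * ‖Ψ s‖) := by
  have hk : 0 ≤ k := by simpa using (norm_nonneg _).trans (hPk 0 le_rfl)
  have hint : ‖∫ s in 0..t, P (t - s) ∘L ((B s - A) ∘L Ψ s)‖
      ≤ ∫ s in 0..t, exp (-lam * t) * (k * β * (exp (lam * s) * ‖Ψ s‖)) := by
    refine intervalIntegral.norm_integral_le_of_norm_le ht
      (Eventually.of_forall fun s hs => ?_) (ContinuousOn.intervalIntegrable_of_Icc ht ?_)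
    · calc ‖P (t - s) ∘L ((B s - A) ∘L Ψ s)‖ ≤ ‖P (t - s)‖ * (‖B s - A‖ * ‖Ψ s‖) :=
            (ContinuousLinearMap.opNorm_comp_le _ _).trans
              (by gcongr; exact ContinuousLinearMap.opNorm_comp_le _ _)
        _ ≤ k * exp (-lam * (t - s)) * (β * ‖Ψ s‖) := by
            gcongr
            · exact hPk _ (by linarith [hs.2])
            · exact hBA s hs.1.le
        _ = exp (-lam * t) * (k * β * (exp (lam * s) * ‖Ψ s‖)) := by
            rw [show -lam * (t - s) = -lam * t + lam * s by ring, exp_add]; ring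
    · exact continuousOn_const.mul (continuousOn_const.mul ((continuous_exp.comp
        (continuous_const.mul continuous_id)).continuousOn.mul
        (hΨ.continuousOn.mono Icc_subset_Ici_self).norm))
  calc ‖Ψ t‖ ≤ ‖P t‖ + ‖∫ s in 0..t, P (t - s) ∘L ((B s - A) ∘L Ψ s)‖ := by
        rw [eq_add_integral hP hΨ hB ht]; exact norm_add_le _ _
    _ ≤ k * exp (-lam * t) + ∫ s in 0..t, exp (-lam * t) * (k * β * (exp (lam * s) * ‖Ψ s‖)) :=
        add_le_add (hPk t ht) hint
    _ = exp (-lam * t) * (k + k * β * ∫ s in 0..t, exp (lam * s) * ‖Ψ s‖) := by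
        rw [intervalIntegral.integral_const_mul, intervalIntegral.integral_const_mul]; ring

theorem norm_le_of_norm_sub_le [CompleteSpace E] (hP : IsTransitionMatrix (fun _ => A) P)
    (hΨ : IsTransitionMatrix B Ψ) (hB : ContinuousOn B (Ici 0)) {k lam β : ℝ}
    (hPk : ∀ t, 0 ≤ t → ‖P t‖ ≤ k * exp (-lam * t)) (hBA : ∀ s, 0 ≤ s → ‖B s - A‖ ≤ β)
    {t : ℝ} (ht : 0 ≤ t) : ‖Ψ t‖ ≤ k * exp ((k * β - lam) * t) := by
  have hk : 0 ≤ k := by simpa using (norm_nonneg _).trans (hPk 0 le_rfl)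
  have hβ : 0 ≤ β := (norm_nonneg _).trans (hBA 0 le_rfl)
  set χ : ℝ → ℝ := fun s => exp (lam * max s 0) * ‖Ψ (max s 0)‖
  have hχc : Continuous χ := by
    have hmax : Continuous (fun s : ℝ => max s 0) := continuous_id.max continuous_const
    exact (continuous_exp.comp (continuous_const.mul hmax)).mul
      (hΨ.continuousOn.comp_continuous hmax fun s => le_max_right s 0).norm
  have hχ : ∀ s, 0 ≤ s → χ s = exp (lam * s) * ‖Ψ s‖ := fun s hs => by
    simp [χ, max_eq_left hs]
  have hΨχ : ∀ t, 0 ≤ t → ‖Ψ t‖ = exp (-lam * t) * χ t := fun t ht => by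
    rw [hχ t ht, ← mul_assoc, ← exp_add]; simp
  have key : ∀ t, 0 ≤ t → χ t ≤ k + k * β * ∫ s in 0..t, χ s := fun t ht => by
    have := norm_le_exp_mul_add_integral hP hΨ hB hPk hBA ht
    rw [hΨχ t ht, ← intervalIntegral.integral_congr fun s hs => hχ s (by
      rw [uIcc_of_le ht] at hs; exact hs.1)] at this
    exact le_of_mul_le_mul_left this (exp_pos _)
  calc ‖Ψ t‖ = exp (-lam * t) * χ t := hΨχ t ht
    _ ≤ exp (-lam * t) * (k * exp (k * β * t)) :=
        mul_le_mul_of_nonneg_left (le_mul_exp_of_le_add_mul_integral hχc (by positivity) key ht)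
          (exp_pos _).le
    _ = k * exp ((k * β - lam) * t) := by rw [mul_left_comm, ← exp_add]; ring_nf

end IsTransitionMatrix

structure IsForwardFlow (F : E → E) (Efl : E → ℝ → E) : Prop where
  zero : ∀ e, Efl e 0 = e
  hasDerivWithinAt : ∀ e t, 0 ≤ t → HasDerivWithinAt (Efl e) (F (Efl e t)) (Ici 0) t

namespace IsForwardFlow

variable {F : E → E} {Efl : E → ℝ → E} {A : E →L[ℝ] E} {P : ℝ → E →L[ℝ] E}
  {Φ : E → ℝ → E →L[ℝ] E}

theorem continuousOn (hE : IsForwardFlow F Efl) (e : E) : ContinuousOn (Efl e) (Ici 0) :=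
  .of_hasDerivWithinAt_Ici (hE.hasDerivWithinAt e)

theorem add [ProperSpace E] (hE : IsForwardFlow F Efl) (hF : LocallyLipschitz F) (e : E)
    {T u : ℝ} (hT : 0 ≤ T) (hu : 0 ≤ u) : Efl e (T + u) = Efl (Efl e T) u :=
  eqOn_Ici_of_hasDerivWithinAt_of_locallyLipschitz hF (f := fun u => Efl e (T + u))
    (fun s hs => (hE.hasDerivWithinAt e (T + s) (by linarith)).comp_const_add_Ici hT)
    (hE.hasDerivWithinAt (Efl e T)) (by simp [hE.zero]) hu

theorem transitionMatrix_add [ProperSpace E] (hE : IsForwardFlow F Efl) (hF : ContDiff ℝ 1 F)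
    (hΦ : ∀ e, IsTransitionMatrix (fun t => fderiv ℝ F (Efl e t)) (Φ e)) (e : E) {T u : ℝ}
    (hT : 0 ≤ T) (hu : 0 ≤ u) : Φ e (T + u) = Φ (Efl e T) u ∘L Φ e T :=
  (hΦ e).comp_of_shift ((hF.continuous_fderiv one_ne_zero).comp_continuousOn (hE.continuousOn e))
    hT ⟨(hΦ _).zero, fun s hs => by
      simpa only [hE.add hF.locallyLipschitz e hT hs] using (hΦ (Efl e T)).hasDerivWithinAt s hs⟩
    hu

theorem exists_dist_lt [ProperSpace E] (hE : IsForwardFlow F Efl) (hF : LocallyLipschitz F)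
    (e₀ : E) (T : ℝ) {ρ : ℝ} (hρ : 0 < ρ) :
    ∃ η > 0, ∀ e ∈ ball e₀ η, ∀ u ∈ Icc 0 T, dist (Efl e u) (Efl e₀ u) < ρ := by
  have hc : ∀ e, ContinuousOn (Efl e) (Icc 0 T) := fun e =>
    (hE.continuousOn e).mono Icc_subset_Ici_self
  obtain ⟨R, hR⟩ := (isCompact_Icc.image_of_continuousOn (hc e₀)).isBounded.subset_closedBall 0
  obtain ⟨K, hK⟩ := hF.locallyLipschitzOn.exists_lipschitzOnWith_of_compact
    (isCompact_closedBall (0 : E) (R + ρ))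
  refine ⟨ρ / 2 * exp (-K * T), by positivity, fun e he => ?_⟩
  refine forall_lt_of_forall_Ico_lt (continuous_dist.comp_continuousOn ((hc e).prodMk (hc e₀)))
    fun τ hτ hlt => ?_
  have hτT : Icc 0 τ ⊆ Icc 0 T := Icc_subset_Icc_right hτ.2
  have hR₀ : ∀ v ∈ Ico 0 τ, dist (Efl e₀ v) 0 ≤ R := fun v hv =>
    hR (mem_image_of_mem _ (hτT (Ico_subset_Icc_self hv)))
  have hdist := dist_le_of_trajectories_ODE_of_mem (v := fun _ => F)
    (s := fun _ => closedBall 0 (R + ρ)) (δ := ρ / 2 * exp (-K * T)) (fun _ _ => hK)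
    ((hc e).mono hτT)
    (fun v hv => (hE.hasDerivWithinAt e v hv.1).mono (Ici_subset_Ici.2 hv.1))
    (fun v hv => by
      have := dist_triangle (Efl e v) (Efl e₀ v) 0
      rw [mem_closedBall]; linarith [hlt v hv, hR₀ v hv])
    ((hc e₀).mono hτT)
    (fun v hv => (hE.hasDerivWithinAt e₀ v hv.1).mono (Ici_subset_Ici.2 hv.1))
    (fun v hv => by rw [mem_closedBall]; linarith [hR₀ v hv])
    (by rw [hE.zero, hE.zero]; exact (mem_ball.1 he).le) τ (right_mem_Icc.2 hτ.1)
  have hexp : exp (-K * T) * exp (K * (τ - 0)) ≤ 1 := by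
    rw [← exp_add, exp_le_one_iff]; nlinarith [K.coe_nonneg, hτ.2]
  calc dist (Efl e τ) (Efl e₀ τ) ≤ ρ / 2 * (exp (-K * T) * exp (K * (τ - 0))) := by
        rw [← mul_assoc]; exact hdist
    _ ≤ ρ / 2 := mul_le_of_le_one_right (by positivity) hexp
    _ < ρ := half_lt_self hρ

theorem dist_inv_smul_smul_le (hE : IsForwardFlow F Efl) (hP : IsTransitionMatrix (fun _ => A) P)
    (δ : E) {h ε t : ℝ} (hh : 0 < h) (ht : 0 ≤ t)
    (hF : ∀ s, 0 ≤ s → ‖F (Efl (h • δ) s) - A (Efl (h • δ) s)‖ ≤ h * ε) :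
    dist (h⁻¹ • Efl (h • δ) t) (P t δ) ≤ gronwallBound 0 ‖A‖₊ ε t := by
  have := dist_le_of_approx_trajectories_ODE (v := fun _ => A) (K := ‖A‖₊)
    (f := fun s => h⁻¹ • Efl (h • δ) s) (f' := fun s => h⁻¹ • F (Efl (h • δ) s))
    (g := fun s => P s δ) (g' := fun s => A (P s δ)) (a := 0) (b := t) (δ := 0)
    (εf := ε) (εg := 0) (fun _ => A.lipschitz)
    (((hE.continuousOn _).mono Icc_subset_Ici_self).const_smul _)
    (fun s hs => ((hE.hasDerivWithinAt _ s hs.1).mono (Ici_subset_Ici.2 hs.1)).const_smul _)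
    (fun s hs => by
      rw [dist_eq_norm, map_smul, ← smul_sub, norm_smul, norm_inv, Real.norm_of_nonneg hh.le]
      exact (inv_mul_le_iff₀ hh).2 (hF s hs.1))
    (((ContinuousLinearMap.apply ℝ E δ).continuous.comp_continuousOn hP.continuousOn).mono
      Icc_subset_Ici_self)
    (fun s hs => by
      simpa using ((hP.hasDerivWithinAt s hs.1).mono (Ici_subset_Ici.2 hs.1)).clm_apply
        (hasDerivWithinAt_const s _ δ))
    (fun s hs => by simp)
    (by simp [hE.zero, hP.zero, smul_smul, inv_mul_cancel₀ hh.ne'])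
    t (right_mem_Icc.2 ht)
  simpa using this

theorem tendsto_inv_smul_smul (hE : IsForwardFlow F Efl) (hF : HasFDerivAt F A 0)
    (hF0 : F 0 = 0) (hP : IsTransitionMatrix (fun _ => A) P) {k r : ℝ} (hr : 0 < r)
    (hstab : ∀ e, ‖e‖ ≤ r → ∀ s, 0 ≤ s → ‖Efl e s‖ ≤ k * ‖e‖) (δ : E) {t : ℝ} (ht : 0 ≤ t) :
    Tendsto (fun h : ℝ => h⁻¹ • Efl (h • δ) t) (𝓝[>] 0) (𝓝 (P t δ)) := by
  rw [Metric.tendsto_nhds]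
  intro c hc
  obtain ⟨c', hc', hc'c⟩ : ∃ c' > 0, gronwallBound 0 ‖A‖₊ (c' * (k * ‖δ‖)) t < c := by
    have hcont : Continuous fun c' : ℝ => gronwallBound 0 ‖A‖₊ (c' * (k * ‖δ‖)) t :=
      (gronwallBound_continuous_ε _ _ _).comp (by fun_prop)
    have := (hcont.tendsto' 0 0 (by simp [gronwallBound_ε0_δ0])).eventually (gt_mem_nhds hc)
    exact ((this.filter_mono (nhdsWithin_le_nhds (s := Ioi 0))).and
      self_mem_nhdsWithin).exists.imp fun c' h => ⟨h.2, h.1⟩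
  obtain ⟨ρ, hρ, hlo⟩ := Metric.eventually_nhds_iff_ball.1 (hF.isLittleO.bound hc')
  have hnorm : Tendsto (fun h : ℝ => ‖h • δ‖) (𝓝 0) (𝓝 0) :=
    Continuous.tendsto' (by fun_prop) 0 0 (by simp)
  filter_upwards [self_mem_nhdsWithin,
    (hnorm.eventually (eventually_le_nhds hr)).filter_mono nhdsWithin_le_nhds,
    ((hnorm.const_mul k).eventually (eventually_lt_nhds (by simpa using hρ))).filter_mono
      nhdsWithin_le_nhds]
    with h (hh : 0 < h) hhr hhρ
  refine (hE.dist_inv_smul_smul_le hP δ hh ht fun s hs => ?_).trans_lt hc'c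
  have hEs := hstab _ hhr s hs
  calc ‖F (Efl (h • δ) s) - A (Efl (h • δ) s)‖ ≤ c' * ‖Efl (h • δ) s‖ := by
        simpa [hF0] using hlo _ (mem_ball_zero_iff.2 (hEs.trans_lt hhρ))
    _ ≤ c' * (k * ‖h • δ‖) := by gcongr
    _ = h * (c' * (k * ‖δ‖)) := by rw [norm_smul, Real.norm_of_nonneg hh.le]; ring

theorem norm_linearization_le (hE : IsForwardFlow F Efl) (hF : HasFDerivAt F A 0)
    (hF0 : F 0 = 0) (hP : IsTransitionMatrix (fun _ => A) P) {k lam r : ℝ} (hk : 0 ≤ k)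
    (hlam : 0 ≤ lam) (hr : 0 < r)
    (hLES : ∀ e t, 0 ≤ t → ‖e‖ ≤ r → ‖Efl e t‖ ≤ k * exp (-lam * t) * ‖e‖) {t : ℝ}
    (ht : 0 ≤ t) : ‖P t‖ ≤ k * exp (-lam * t) := by
  have hstab : ∀ e, ‖e‖ ≤ r → ∀ s, 0 ≤ s → ‖Efl e s‖ ≤ k * ‖e‖ := fun e he s hs =>
    (hLES e s hs he).trans (by
      gcongr; exact mul_le_of_le_one_right hk (exp_le_one_iff.2 (by nlinarith)))
  refine ContinuousLinearMap.opNorm_le_bound _ (by positivity) fun δ => ?_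
  have hnorm : Tendsto (fun h : ℝ => ‖h • δ‖) (𝓝 0) (𝓝 0) :=
    Continuous.tendsto' (by fun_prop) 0 0 (by simp)
  refine le_of_tendsto (hE.tendsto_inv_smul_smul hF hF0 hP hr hstab δ ht).norm ?_
  filter_upwards [self_mem_nhdsWithin,
    (hnorm.eventually (eventually_le_nhds hr)).filter_mono nhdsWithin_le_nhds]
    with h (hh : 0 < h) hhr
  rw [norm_smul, norm_inv, Real.norm_of_nonneg hh.le]
  calc h⁻¹ * ‖Efl (h • δ) t‖ ≤ h⁻¹ * (k * exp (-lam * t) * ‖h • δ‖) := by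
        gcongr; exact hLES _ t ht hhr
    _ = k * exp (-lam * t) * ‖δ‖ := by
        rw [norm_smul, Real.norm_of_nonneg hh.le]; field_simp

theorem exists_closedBall_norm_transitionMatrix_le [CompleteSpace E] (hE : IsForwardFlow F Efl)
    (hF : ContDiff ℝ 1 F) (hF2 : ContDiffAt ℝ 2 F 0) (hF0 : F 0 = 0)
    (hΦ : ∀ e, IsTransitionMatrix (fun t => fderiv ℝ F (Efl e t)) (Φ e)) {k lam r : ℝ}
    (hk : 0 ≤ k) (hlam : 0 < lam) (hr : 0 < r)
    (hLES : ∀ e t, 0 ≤ t → ‖e‖ ≤ r → ‖Efl e t‖ ≤ k * exp (-lam * t) * ‖e‖) :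
    ∃ r' > 0, ∀ e, ‖e‖ ≤ r' → ∀ t, 0 ≤ t → ‖Φ e t‖ ≤ k * exp (-(lam / 2) * t) := by
  set A := fderiv ℝ F 0
  have hEfl0 : ∀ t, 0 ≤ t → Efl 0 t = 0 := fun t ht => by
    simpa using hLES 0 t ht (by simpa using hr.le)
  have hP : IsTransitionMatrix (fun _ => A) (Φ 0) :=
    ⟨(hΦ 0).zero, fun t ht => by simpa [hEfl0 t ht] using (hΦ 0).hasDerivWithinAt t ht⟩
  have hPk : ∀ t, 0 ≤ t → ‖Φ 0 t‖ ≤ k * exp (-lam * t) := fun t ht =>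
    hE.norm_linearization_le (hF.differentiable one_ne_zero 0).hasFDerivAt hF0 hP hk hlam.le
      hr hLES ht
  obtain ⟨L, U, hU, hL⟩ := (hF2.fderiv_right (m := 1) le_rfl).exists_lipschitzOnWith
  obtain ⟨ρ, hρ, hρU⟩ := Metric.mem_nhds_iff.1 hU
  obtain ⟨r', hr', hr'r, hr'ρ, hr'lam⟩ :
      ∃ r' > 0, r' ≤ r ∧ k * r' < ρ ∧ k * (L * (k * r')) ≤ lam / 2 := by
    have hcont : Tendsto (fun r' : ℝ => (r', k * r', k * (L * (k * r')))) (𝓝 0) (𝓝 (0, 0, 0)) :=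
      Continuous.tendsto' (by fun_prop) 0 _ (by simp)
    have := (hcont.eventually ((eventually_le_nhds hr).prod_nhds ((eventually_lt_nhds hρ).prod_nhds
      (eventually_le_nhds (half_pos hlam))))).filter_mono (nhdsWithin_le_nhds (s := Ioi 0))
    obtain ⟨r', h, hr'⟩ := (this.and self_mem_nhdsWithin).exists
    exact ⟨r', hr', h⟩
  refine ⟨r', hr', fun e he t ht => ?_⟩
  have hEs : ∀ s, 0 ≤ s → ‖Efl e s‖ ≤ k * r' := fun s hs =>
    (hLES e s hs (he.trans hr'r)).trans <|
      mul_le_mul (mul_le_of_le_one_right hk (exp_le_one_iff.2 (by nlinarith))) he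
        (norm_nonneg _) hk
  have hBA : ∀ s, 0 ≤ s → ‖fderiv ℝ F (Efl e s) - A‖ ≤ L * (k * r') := fun s hs => by
    have := hL.dist_le_mul _ (hρU (mem_ball_zero_iff.2 ((hEs s hs).trans_lt hr'ρ))) _
      (hρU (mem_ball_self hρ))
    rw [dist_eq_norm, dist_zero_right] at this
    exact this.trans (by gcongr; exact hEs s hs)
  have hB : ContinuousOn (fun t => fderiv ℝ F (Efl e t)) (Ici 0) :=
    (hF.continuous_fderiv one_ne_zero).comp_continuousOn (hE.continuousOn e)
  calc ‖Φ e t‖ ≤ k * exp ((k * (L * (k * r')) - lam) * t) :=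
        hP.norm_le_of_norm_sub_le (hΦ e) hB hPk hBA ht
    _ ≤ k * exp (-(lam / 2) * t) := by gcongr; linarith

theorem exists_eventually_norm_transitionMatrix_le [ProperSpace E] (hE : IsForwardFlow F Efl)
    (hF : ContDiff ℝ 1 F) (hΦ : ∀ e, IsTransitionMatrix (fun t => fderiv ℝ F (Efl e t)) (Φ e))
    (hGA : ∀ e, Tendsto (fun t => ‖Efl e t‖) atTop (𝓝 0)) {k μ r : ℝ} (hμ : 0 ≤ μ) (hr : 0 < r)
    (hsmall : ∀ e, ‖e‖ ≤ r → ∀ t, 0 ≤ t → ‖Φ e t‖ ≤ k * exp (-μ * t)) (e₀ : E) :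
    ∃ C, ∀ᶠ e in 𝓝 e₀, ∀ t, 0 ≤ t → ‖Φ e t‖ ≤ C * exp (-μ * t) := by
  obtain ⟨T, hTr, hT⟩ := (((hGA e₀).eventually (gt_mem_nhds (half_pos hr))).and
    (eventually_ge_atTop 0)).exists
  obtain ⟨η, hη, hdist⟩ := hE.exists_dist_lt hF.locallyLipschitz e₀ T (half_pos hr)
  obtain ⟨M, hM⟩ := ((isCompact_Icc.image_of_continuousOn ((hE.continuousOn e₀).mono
    Icc_subset_Ici_self)).cthickening (r := r / 2)).exists_bound_of_continuousOn
    (hF.continuous_fderiv one_ne_zero).continuousOn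
  set M' := max M 0
  refine ⟨max 1 k * exp (M' * T) * exp (μ * T),
    eventually_of_mem (ball_mem_nhds e₀ hη) fun e he t ht => ?_⟩
  have hΦT : ∀ u ∈ Icc 0 T, ‖Φ e u‖ ≤ exp (M' * T) := fun u hu =>
    ((hΦ e).norm_le_exp (fun s hs => (hM _ (mem_cthickening_of_dist_le _ _ _ _
      (mem_image_of_mem _ (Ico_subset_Icc_self hs))
      (hdist e he s (Ico_subset_Icc_self hs)).le)).trans (le_max_left _ _)) hu).trans
      (exp_le_exp.2 (mul_le_mul_of_nonneg_left hu.2 (le_max_right _ _)))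
  have hET : ‖Efl e T‖ ≤ r := by
    have := dist_triangle (Efl e T) (Efl e₀ T) 0
    rw [dist_zero_right, dist_zero_right] at this
    linarith [hdist e he T ⟨hT, le_rfl⟩, hTr]
  exact norm_le_mul_exp_of_comp hT hμ hΦT (hsmall _ hET)
    (fun u hu => hE.transitionMatrix_add hF hΦ e hT hu) ht

end IsForwardFlow

theorem IsCompact.exists_forall_le_of_eventually {X ι : Type*} [TopologicalSpace X] {K : Set X}
    (hK : IsCompact K) {f : X → ι → ℝ} (hf : ∀ x ∈ K, ∃ C, ∀ᶠ y in 𝓝 x, ∀ i, f y i ≤ C) :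
    ∃ C, ∀ x ∈ K, ∀ i, f x i ≤ C := by
  refine hK.induction_on (p := fun s => ∃ C, ∀ x ∈ s, ∀ i, f x i ≤ C) ⟨0, by simp⟩
    (fun s t hst ⟨C, hC⟩ => ⟨C, fun x hx => hC x (hst hx)⟩)
    (fun s t ⟨C, hC⟩ ⟨D, hD⟩ => ⟨max C D, fun x hx i => hx.elim
      (fun h => (hC x h i).trans (le_max_left _ _)) (fun h => (hD x h i).trans (le_max_right _ _))⟩)
    fun x hx => ?_
  obtain ⟨C, hC⟩ := hf x hx
  exact ⟨_, mem_nhdsWithin_of_mem_nhds hC, C, fun y hy => hy⟩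

theorem exists_strictMonoOn_forall_le {X ι : Type*} (ν : X → ℝ) (hν : ∀ x, 0 ≤ ν x)
    (f : X → ι → ℝ) (hf : ∀ s, ∃ C, ∀ x, ν x ≤ s → ∀ i, f x i ≤ C) :
    ∃ κ : ℝ → ℝ, StrictMonoOn κ (Ici 0) ∧ (∀ s, 0 ≤ s → 0 ≤ κ s) ∧ ∀ x i, f x i ≤ κ (ν x) := by
  set S : ℝ → Set ℝ := fun s => {C | 0 ≤ C ∧ ∀ x, ν x ≤ s → ∀ i, f x i ≤ C}
  have hS : ∀ s, (S s).Nonempty := fun s => by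
    obtain ⟨C, hC⟩ := hf s
    exact ⟨max C 0, le_max_right _ _, fun x hx i => (hC x hx i).trans (le_max_left _ _)⟩
  have hg0 : ∀ s, 0 ≤ sInf (S s) := fun s => le_csInf (hS s) fun C hC => hC.1
  have hg : Monotone fun s => sInf (S s) := fun s s' hss' =>
    csInf_le_csInf ⟨0, fun C hC => hC.1⟩ (hS s') fun C hC =>
      ⟨hC.1, fun x hx => hC.2 x (hx.trans hss')⟩
  refine ⟨fun s => sInf (S s) + s, fun a _ b _ hab => add_lt_add_of_le_of_lt (hg hab.le) hab,
    fun s hs => add_nonneg (hg0 s) hs, fun x i => ?_⟩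
  exact (le_csInf (hS _) fun C hC => hC.2 x le_rfl i).trans (le_add_of_nonneg_right (hν x))

theorem le_mul_exp_neg_iff {a C μ t : ℝ} : a ≤ C * exp (-μ * t) ↔ a * exp (μ * t) ≤ C := by
  rw [← le_div_iff₀ (exp_pos _), div_eq_mul_inv, ← exp_neg, neg_mul]

theorem fact1_global
    {n : ℕ}
    (F : Euc n → Euc n) (hF : ContDiff ℝ 1 F) (hF0 : F 0 = 0)
    -- F is C² around the origin
    (ε : ℝ) (hε : 0 < ε) (hF2 : ContDiffOn ℝ 2 F (Metric.ball 0 ε))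
    -- forward complete flow
    (Efl : Euc n → ℝ → Euc n)
    (hinit : ∀ e, Efl e 0 = e)
    (hflow : ∀ e t, 0 ≤ t → HasDerivWithinAt (Efl e) (F (Efl e t)) (Ici 0) t)
    -- transition matrix of the linearization along solutions
    (Φ : Euc n → ℝ → Euc n →L[ℝ] Euc n)
    (hΦ0 : ∀ e, Φ e 0 = ContinuousLinearMap.id ℝ (Euc n))
    (hΦ : ∀ e t, 0 ≤ t →
      HasDerivWithinAt (Φ e) ((fderiv ℝ F (Efl e t)) ∘L Φ e t) (Ici 0) t)
    -- local exponential stability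
    (k1 lam1 r1 : ℝ) (hk1 : 0 < k1) (hlam1 : 0 < lam1) (hr1 : 0 < r1)
    (hLES : ∀ e t, 0 ≤ t → ‖e‖ ≤ r1 → ‖Efl e t‖ ≤ k1 * exp (-lam1 * t) * ‖e‖)
    -- global attractivity
    (hGA : ∀ e, Tendsto (fun t => ‖Efl e t‖) atTop (𝓝 0)) :
    ∃ lamt > (0:ℝ), ∃ kt : ℝ → ℝ,
      StrictMonoOn kt (Ici 0) ∧ (∀ s, 0 ≤ s → 0 ≤ kt s) ∧
      ∀ (e δ : Euc n) (t : ℝ), 0 ≤ t →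
        ‖Φ e t δ‖ ≤ kt ‖e‖ * exp (-lamt * t) * ‖δ‖ := by
  have hE : IsForwardFlow F Efl := ⟨hinit, hflow⟩
  have hΦE : ∀ e, IsTransitionMatrix (fun t => fderiv ℝ F (Efl e t)) (Φ e) := fun e =>
    ⟨hΦ0 e, hΦ e⟩
  obtain ⟨r, hr, hsmall⟩ := hE.exists_closedBall_norm_transitionMatrix_le hF
    (hF2.contDiffAt (ball_mem_nhds 0 hε)) hF0 hΦE hk1.le hlam1 hr1 hLES
  have hlocal := hE.exists_eventually_norm_transitionMatrix_le hF hΦE hGA (half_pos hlam1).le hr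
    hsmall
  have hball : ∀ s, ∃ C, ∀ e : Euc n, ‖e‖ ≤ s → ∀ t : Ici (0 : ℝ),
      ‖Φ e t‖ * exp (lam1 / 2 * t) ≤ C := fun s => by
    obtain ⟨C, hC⟩ := (isCompact_closedBall (0 : Euc n) s).exists_forall_le_of_eventually
      (f := fun e (t : Ici (0 : ℝ)) => ‖Φ e t‖ * exp (lam1 / 2 * t)) fun e _ =>
        (hlocal e).imp fun C hC => hC.mono fun e' he' t => le_mul_exp_neg_iff.1 (he' t t.2)
    exact ⟨C, fun e he => hC e (mem_closedBall_zero_iff.2 he)⟩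
  obtain ⟨κ, hκ, hκ0, hκΦ⟩ := exists_strictMonoOn_forall_le _ (fun e : Euc n => norm_nonneg e) _
    hball
  refine ⟨lam1 / 2, half_pos hlam1, κ, hκ, hκ0, fun e δ t ht => ?_⟩
  calc ‖Φ e t δ‖ ≤ ‖Φ e t‖ * ‖δ‖ := (Φ e t).le_opNorm δ
    _ ≤ κ ‖e‖ * exp (-(lam1 / 2) * t) * ‖δ‖ := by
        gcongr; exact le_mul_exp_neg_iff.2 (hκΦ e ⟨t, ht⟩)
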